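/- Let ½ ≤ γ < ν ≤ 1, μ as in the supersolution lemma, and let g: Ω_γ → ℝ satisfy (∂_t − Δ_ν) g ≤ A r^{μ−2} in Ω_γ and g ≤ A on the parabolic boundary ∂Ω_γ. Then for (r,t) ∈ Ω_γ, g(r,t) ≤ C_{μ,ν} A ((λ^{R,1}_γ(t)/r)^ν + r^{min[μ, ν(ν/γ − 1)]}), where λ^{R,1}_γ(t) = max[R, (1−t)_+^{1/(2γ)}]. -/

import Mathlib

open Set Filter Topology Real
set_option maxHeartbeats 1000000


/-- If `f` is differentiable at `x` and `f y ≤ f x` for `y` slightly to the left of `x`,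
then `deriv f x ≥ 0`. -/
lemma deriv_nonneg_of_eventually_le_left {f : ℝ → ℝ} {x : ℝ}
    (hf : DifferentiableAt ℝ f x) (h : ∀ᶠ y in 𝓝[<] x, f y ≤ f x) :
    0 ≤ deriv f x := by
  have hs : Tendsto (slope f x) (𝓝[<] x) (𝓝 (deriv f x)) :=
    (hasDerivAt_iff_tendsto_slope.1 hf.hasDerivAt).mono_left
      (nhdsWithin_mono x (fun y hy => ne_of_lt hy))
  refine ge_of_tendsto hs ?_
  filter_upwards [h, self_mem_nhdsWithin] with y hy hy'
  rw [slope_def_field]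
  refine div_nonneg_iff.2 (Or.inr ⟨sub_nonpos.2 hy, ?_⟩)
  simp only [mem_Iio] at hy'
  linarith

/-- Second derivative test at a local maximum. -/
lemma second_deriv_nonpos_of_isLocalMax {f : ℝ → ℝ} {x : ℝ}
    (hf : ∀ᶠ y in 𝓝 x, DifferentiableAt ℝ f y)
    (hf' : DifferentiableAt ℝ (deriv f) x)
    (h : IsLocalMax f x) : deriv (deriv f) x ≤ 0 := by
  by_contra hpos
  push_neg at hpos
  have h0 : deriv f x = 0 := h.deriv_eq_zero
  have hslope : Tendsto (slope (deriv f) x) (𝓝[>] x) (𝓝 (deriv (deriv f) x)) :=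
    (hasDerivAt_iff_tendsto_slope.1 hf'.hasDerivAt).mono_left
      (nhdsWithin_mono x (fun y hy => ne_of_gt hy))
  have hev : ∀ᶠ y in 𝓝[>] x, 0 < deriv f y := by
    filter_upwards [hslope.eventually_const_lt hpos, self_mem_nhdsWithin] with y hy hy'
    rw [slope_def_field] at hy
    simp only [mem_Ioi] at hy'
    rcases div_pos_iff.1 hy with ⟨h1, _⟩ | ⟨_, h2⟩
    · linarith
    · linarith
  -- extract an interval (x, u) where everything holds
  have hall : ∀ᶠ y in 𝓝[>] x, 0 < deriv f y ∧ (DifferentiableAt ℝ f y ∧ f y ≤ f x) :=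
    hev.and ((hf.and h).filter_mono nhdsWithin_le_nhds)
  rcases (mem_nhdsGT_iff_exists_Ioo_subset).1 hall with ⟨u, hu, hsub⟩
  simp only [mem_Ioi] at hu
  set m := (x + u) / 2 with hm
  have hxm : x < m := by simp [hm]; linarith
  have hmu : m < u := by simp [hm]; linarith
  have hmono : StrictMonoOn f (Icc x m) := by
    apply strictMonoOn_of_deriv_pos (convex_Icc x m)
    · intro y hy
      rcases eq_or_lt_of_le hy.1 with rfl | hlt
      · exact (hf.self_of_nhds).continuousAt.continuousWithinAt
      · exact ((hsub ⟨hlt, lt_of_le_of_lt hy.2 hmu⟩).2.1).continuousAt.continuousWithinAt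
    · intro y hy
      rw [interior_Icc] at hy
      exact (hsub ⟨hy.1, lt_trans hy.2 hmu⟩).1
  have h1 : f x < f m := hmono (left_mem_Icc.2 hxm.le) (right_mem_Icc.2 hxm.le) hxm
  have h2 : f m ≤ f x := (hsub ⟨hxm, hmu⟩).2.2
  linarith

/-- Parabolic maximum principle on a region with moving lower spatial boundary. -/
lemma parabolic_max_principle (T₀ T₁ : ℝ) (lam : ℝ → ℝ)
    (hlamc : Continuous lam)
    (hlam0 : ∀ t, T₀ ≤ t → t ≤ T₁ → 0 < lam t)
    (w : ℝ → ℝ → ℝ)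
    (hwc : ContinuousOn (fun p : ℝ × ℝ => w p.1 p.2)
      {p : ℝ × ℝ | T₀ ≤ p.2 ∧ p.2 ≤ T₁ ∧ lam p.2 ≤ p.1 ∧ p.1 ≤ 1})
    (hbdry1 : ∀ t, T₀ ≤ t → t ≤ T₁ → w 1 t ≤ 0)
    (hbdry2 : ∀ t, T₀ ≤ t → t ≤ T₁ → w (lam t) t ≤ 0)
    (hinit : ∀ r, lam T₀ ≤ r → r ≤ 1 → w r T₀ ≤ 0)
    (hkey : ∀ r t, T₀ < t → t ≤ T₁ → lam t < r → r < 1 → 0 < w r t →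
        0 ≤ deriv (fun s => w r s) t → deriv (fun x => w x t) r = 0 →
        deriv (deriv (fun x => w x t)) r ≤ 0 → False)
    (hdt : ∀ r t, T₀ < t → t ≤ T₁ → lam t < r → r < 1 →
        DifferentiableAt ℝ (fun s => w r s) t)
    (hdr : ∀ r t, T₀ < t → t ≤ T₁ → lam t < r → r < 1 →
        (∀ᶠ y in 𝓝 r, DifferentiableAt ℝ (fun x => w x t) y) ∧
        DifferentiableAt ℝ (deriv (fun x => w x t)) r) :
    ∀ r t, T₀ ≤ t → t ≤ T₁ → lam t ≤ r → r ≤ 1 → w r t ≤ 0 := by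
  intro r t ht0 ht1 hr0 hr1
  by_contra hpos0
  push_neg at hpos0
  set D : Set (ℝ × ℝ) := {p : ℝ × ℝ | T₀ ≤ p.2 ∧ p.2 ≤ T₁ ∧ lam p.2 ≤ p.1 ∧ p.1 ≤ 1} with hD
  have hDclosed : IsClosed D := by
    apply IsClosed.inter (isClosed_le continuous_const continuous_snd)
    apply IsClosed.inter (isClosed_le continuous_snd continuous_const)
    exact IsClosed.inter (isClosed_le (hlamc.comp continuous_snd) continuous_fst)
      (isClosed_le continuous_fst continuous_const)
  have hDsub : D ⊆ Icc (0:ℝ) 1 ×ˢ Icc T₀ T₁ := by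
    rintro ⟨x, s⟩ ⟨h1, h2, h3, h4⟩
    exact ⟨⟨le_of_lt (lt_of_lt_of_le (hlam0 s h1 h2) h3), h4⟩, h1, h2⟩
  have hDcomp : IsCompact D :=
    (isCompact_Icc.prod isCompact_Icc).of_isClosed_subset hDclosed hDsub
  have hmem : (r, t) ∈ D := ⟨ht0, ht1, hr0, hr1⟩
  obtain ⟨p, hpD, hpmax⟩ := hDcomp.exists_isMaxOn ⟨(r, t), hmem⟩ hwc
  obtain ⟨hp1, hp2, hp3, hp4⟩ := hpD
  have hwp : 0 < w p.1 p.2 := lt_of_lt_of_le hpos0 (hpmax hmem)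
  -- case analysis on location of the max
  rcases eq_or_lt_of_le hp1 with ht0eq | ht0lt
  · exact absurd hwp (not_lt.2 (by rw [← ht0eq]; exact hinit p.1 (ht0eq ▸ hp3) hp4))
  rcases eq_or_lt_of_le hp4 with hr1eq | hr1lt
  · exact absurd hwp (not_lt.2 (by rw [hr1eq]; exact hbdry1 p.2 hp1 hp2))
  rcases eq_or_lt_of_le hp3 with hreq | hrlt
  · exact absurd hwp (not_lt.2 (by rw [← hreq]; exact hbdry2 p.2 hp1 hp2))
  -- interior max
  have hlocmax : IsLocalMax (fun x => w x p.2) p.1 := by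
    filter_upwards [Ioo_mem_nhds hrlt hr1lt] with x hx
    exact hpmax (show (x, p.2) ∈ D from ⟨hp1, hp2, hx.1.le, hx.2.le⟩)
  have hderiv0 : deriv (fun x => w x p.2) p.1 = 0 := hlocmax.deriv_eq_zero
  have hsecond : deriv (deriv (fun x => w x p.2)) p.1 ≤ 0 :=
    second_deriv_nonpos_of_isLocalMax (hdr p.1 p.2 ht0lt hp2 hrlt hr1lt).1
      (hdr p.1 p.2 ht0lt hp2 hrlt hr1lt).2 hlocmax
  have htime : 0 ≤ deriv (fun s => w p.1 s) p.2 := by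
    apply deriv_nonneg_of_eventually_le_left (hdt p.1 p.2 ht0lt hp2 hrlt hr1lt)
    have e1 : ∀ᶠ s in 𝓝 p.2, T₀ < s := (isOpen_lt continuous_const continuous_id).mem_nhds ht0lt
    have e2 : ∀ᶠ s in 𝓝 p.2, lam s < p.1 :=
      (isOpen_lt hlamc continuous_const).mem_nhds hrlt
    filter_upwards [nhdsWithin_le_nhds (e1.and e2), self_mem_nhdsWithin] with s hs hs'
    simp only [mem_Iio] at hs'
    exact hpmax (show (p.1, s) ∈ D from ⟨hs.1.le, le_trans hs'.le hp2, hs.2.le, hr1lt.le⟩)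
  exact hkey p.1 p.2 ht0lt hp2 hrlt hr1lt hwp htime hderiv0 hsecond

/-- The key pointwise supersolution inequality for the explicit barrier. -/
lemma supersol_ineq (γ ν μ β a σ ρ c₂ N K : ℝ)
    (hν0 : 0 < ν) (hβ0 : 0 < β) (hβν : β < ν) (hμβ : β ≤ μ)
    (ha0 : 0 < a) (ha1 : a ≤ 1)
    (hσ0 : 0 ≤ σ) (hσν : σ < ν)
    (hρ0 : 0 < ρ) (hγ0 : 0 < γ)
    (hρdef : ρ = a - (ν + σ)/2)
    (hc₂ : c₂ = ρ / (2*(ν^2 - σ^2)))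
    (hN : a * c₂ ^ ((ν+σ)/2) ≤ N * ρ / 2) (hN0 : 0 < N)
    (hK1 : 1 + a * c₂ ^ (a-1) + N * (ν^2 - σ^2) ≤ K * (ν^2 - β^2))
    (hE4 : β ≤ 2*γ*ρ + σ) (hE5 : β ≤ 2*a - ν) :
    ∀ s r : ℝ, 0 < s → 0 < r → r ≤ 1 → s ≤ r ^ (2*γ) →
      r ^ (μ-2) ≤ K*(ν^2-β^2)*r^(β-2) - a*s^(a-1)*r^(-ν)
        + N*ρ*s^(ρ-1)*r^σ - N*(ν^2-σ^2)*s^ρ*r^(σ-2) := by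
  intro s r hs hr0 hr1 hs2γ
  have hνσ : (0:ℝ) < ν^2 - σ^2 := by nlinarith
  have hνβ : (0:ℝ) < ν^2 - β^2 := by nlinarith
  have hc₂0 : (0:ℝ) < c₂ := by rw [hc₂]; positivity
  have hK1' : (1:ℝ) ≤ K*(ν^2-β^2) := by
    have h1 := mul_pos ha0 (rpow_pos_of_pos hc₂0 (a-1))
    have h2 := mul_pos hN0 hνσ
    linarith
  have hμ2 : r ^ (μ-2) ≤ r ^ (β-2) := rpow_le_rpow_of_exponent_ge hr0 hr1 (by linarith)
  have hb2pos : (0:ℝ) < r ^ (β-2) := rpow_pos_of_pos hr0 _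
  have es : s^ρ = s^(ρ-1)*s := by
    nth_rewrite 1 [show ρ = (ρ-1)+1 by ring]
    rw [Real.rpow_add hs, Real.rpow_one]
  have er2 : r^(σ-2)*r^((2:ℝ)) = r^σ := by
    rw [← Real.rpow_add hr0]; congr 1; ring
  rcases le_or_gt ((ν^2-σ^2)*s) (ρ/2*r^((2:ℝ))) with hcase | hcase
  · -- OUTER case
    have i3 : r ^ (μ-2) ≤ K*(ν^2-β^2)*r^(β-2) := by
      calc r ^ (μ-2) ≤ r ^ (β-2) := hμ2
        _ = 1 * r ^ (β-2) := by ring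
        _ ≤ K*(ν^2-β^2)*r^(β-2) := mul_le_mul_of_nonneg_right hK1' hb2pos.le
    have i1 : N*(ν^2-σ^2)*s^ρ*r^(σ-2) ≤ N*ρ/2*s^(ρ-1)*r^σ := by
      rw [es, ← er2]
      calc N*(ν^2-σ^2)*(s^(ρ-1)*s)*r^(σ-2)
          = ((ν^2-σ^2)*s) * (N*(s^(ρ-1)*r^(σ-2))) := by ring
        _ ≤ (ρ/2*r^((2:ℝ))) * (N*(s^(ρ-1)*r^(σ-2))) :=
            mul_le_mul_of_nonneg_right hcase (by positivity)
        _ = N*ρ/2*s^(ρ-1)*(r^(σ-2)*r^((2:ℝ))) := by ring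
    have hsc : s ≤ c₂ * r^((2:ℝ)) := by
      rw [hc₂, div_mul_eq_mul_div, le_div_iff₀ (by linarith : (0:ℝ) < 2*(ν^2-σ^2))]
      linarith
    have ea : s^(a-1) = s^(ρ-1)*s^((ν+σ)/2) := by
      rw [← Real.rpow_add hs]; congr 1; rw [hρdef]; ring
    have eνσ : r^(ν+σ)*r^(-ν) = r^σ := by
      rw [← Real.rpow_add hr0]; congr 1; ring
    have hb1 : s^((ν+σ)/2) ≤ c₂^((ν+σ)/2) * r^(ν+σ) := by
      calc s^((ν+σ)/2) ≤ (c₂*r^((2:ℝ)))^((ν+σ)/2) :=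
            Real.rpow_le_rpow hs.le hsc (by positivity)
        _ = c₂^((ν+σ)/2) * (r^((2:ℝ)))^((ν+σ)/2) :=
            Real.mul_rpow hc₂0.le (rpow_nonneg hr0.le _)
        _ = c₂^((ν+σ)/2) * r^(ν+σ) := by
            rw [← Real.rpow_mul hr0.le]; congr 2; ring
    have i2 : a*s^(a-1)*r^(-ν) ≤ N*ρ/2*s^(ρ-1)*r^σ := by
      rw [ea, ← eνσ]
      calc a*(s^(ρ-1)*s^((ν+σ)/2))*r^(-ν)
          = s^((ν+σ)/2) * (a*(s^(ρ-1)*r^(-ν))) := by ring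
        _ ≤ (c₂^((ν+σ)/2) * r^(ν+σ)) * (a*(s^(ρ-1)*r^(-ν))) :=
            mul_le_mul_of_nonneg_right hb1 (by positivity)
        _ = (a * c₂^((ν+σ)/2)) * (s^(ρ-1)*(r^(ν+σ)*r^(-ν))) := by ring
        _ ≤ (N*ρ/2) * (s^(ρ-1)*(r^(ν+σ)*r^(-ν))) :=
            mul_le_mul_of_nonneg_right hN (by positivity)
        _ = N*ρ/2*s^(ρ-1)*(r^(ν+σ)*r^(-ν)) := by ring
    linarith
  · -- INNER case
    have hsc' : c₂*r^((2:ℝ)) ≤ s := by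
      rw [hc₂, div_mul_eq_mul_div, div_le_iff₀ (by linarith : (0:ℝ) < 2*(ν^2-σ^2))]
      nlinarith [hcase]
    have hcr0 : (0:ℝ) < c₂*r^((2:ℝ)) := by positivity
    have t1 : s^(a-1) ≤ (c₂*r^((2:ℝ)))^(a-1) :=
      Real.rpow_le_rpow_of_nonpos hcr0 hsc' (by linarith)
    have t2 : (c₂*r^((2:ℝ)))^(a-1) = c₂^(a-1) * r^(2*(a-1)) := by
      rw [Real.mul_rpow hc₂0.le (rpow_nonneg hr0.le _), ← Real.rpow_mul hr0.le]
    have t3 : r^(2*(a-1))*r^(-ν) = r^(2*a-2-ν) := by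
      rw [← Real.rpow_add hr0]; congr 1; ring
    have t4 : r^(2*a-2-ν) ≤ r^(β-2) := rpow_le_rpow_of_exponent_ge hr0 hr1 (by linarith)
    have i1' : a*s^(a-1)*r^(-ν) ≤ a*c₂^(a-1)*r^(β-2) := by
      calc a*s^(a-1)*r^(-ν)
          = s^(a-1) * (a*r^(-ν)) := by ring
        _ ≤ (c₂*r^((2:ℝ)))^(a-1) * (a*r^(-ν)) :=
            mul_le_mul_of_nonneg_right t1 (by positivity)
        _ = (a*c₂^(a-1)) * (r^(2*(a-1))*r^(-ν)) := by rw [t2]; ring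
        _ = (a*c₂^(a-1)) * r^(2*a-2-ν) := by rw [t3]
        _ ≤ (a*c₂^(a-1)) * r^(β-2) := mul_le_mul_of_nonneg_left t4 (by positivity)
        _ = a*c₂^(a-1)*r^(β-2) := by ring
    have u1 : s^ρ ≤ r^(2*γ*ρ) := by
      calc s^ρ ≤ (r^(2*γ))^ρ := Real.rpow_le_rpow hs.le hs2γ hρ0.le
        _ = r^(2*γ*ρ) := by rw [← Real.rpow_mul hr0.le]
    have u2 : r^(2*γ*ρ)*r^(σ-2) = r^(2*γ*ρ+σ-2) := by
      rw [← Real.rpow_add hr0]; congr 1; ring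
    have u3 : r^(2*γ*ρ+σ-2) ≤ r^(β-2) := rpow_le_rpow_of_exponent_ge hr0 hr1 (by linarith)
    have i2' : N*(ν^2-σ^2)*s^ρ*r^(σ-2) ≤ N*(ν^2-σ^2)*r^(β-2) := by
      calc N*(ν^2-σ^2)*s^ρ*r^(σ-2)
          = s^ρ * (N*(ν^2-σ^2)*r^(σ-2)) := by ring
        _ ≤ r^(2*γ*ρ) * (N*(ν^2-σ^2)*r^(σ-2)) :=
            mul_le_mul_of_nonneg_right u1 (by positivity)
        _ = (N*(ν^2-σ^2)) * (r^(2*γ*ρ)*r^(σ-2)) := by ring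
        _ = (N*(ν^2-σ^2)) * r^(2*γ*ρ+σ-2) := by rw [u2]
        _ ≤ (N*(ν^2-σ^2)) * r^(β-2) := mul_le_mul_of_nonneg_left u3 (by positivity)
        _ = N*(ν^2-σ^2)*r^(β-2) := by ring
    have i3' : (0:ℝ) ≤ N*ρ*s^(ρ-1)*r^σ := by positivity
    have hKmul := mul_le_mul_of_nonneg_right hK1 hb2pos.le
    linarith


lemma constants_pack (γ ν μ : ℝ) (hγ : 1/2 ≤ γ) (hγν : γ < ν) (hν : ν ≤ 1)
    (hμ0 : 0 < μ) (hμ : μ < min ν (ν^2/γ - 3*ν + 2)) :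
    ∃ β a σ ρ c₂ N K : ℝ,
      β = min μ (ν*(ν/γ-1)) ∧
      0 < ν ∧ 0 < β ∧ β < ν ∧ β ≤ μ ∧ 0 < a ∧ a ≤ 1 ∧ 0 ≤ σ ∧ σ < ν ∧ 0 < ρ ∧ 0 < γ ∧
      ρ = a - (ν+σ)/2 ∧ c₂ = ρ/(2*(ν^2-σ^2)) ∧
      a*c₂^((ν+σ)/2) ≤ N*ρ/2 ∧ 0 < N ∧
      1 + a*c₂^(a-1) + N*(ν^2-σ^2) ≤ K*(ν^2-β^2) ∧
      β ≤ 2*γ*ρ + σ ∧ β ≤ 2*a - ν ∧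
      N + 1 ≤ K ∧ a = ν/(2*γ) ∧ 2*γ*a = ν := by
  have hγ0 : (0:ℝ) < γ := by linarith
  have hν0 : (0:ℝ) < ν := lt_trans hγ0 hγν
  have hγ1 : γ < 1 := lt_of_lt_of_le hγν hν
  have hγ1' : (0:ℝ) < 1 - γ := by linarith
  have hμν : μ < ν := lt_of_lt_of_le hμ (min_le_left _ _)
  have hμX : μ < ν^2/γ - 3*ν + 2 := lt_of_lt_of_le hμ (min_le_right _ _)
  have hβp : (0:ℝ) < ν*(ν/γ-1) := by
    apply mul_pos hν0
    have : (1:ℝ) < ν/γ := (one_lt_div hγ0).2 hγν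
    linarith
  set β := min μ (ν*(ν/γ-1)) with hβdef
  have hβ0 : 0 < β := lt_min hμ0 hβp
  have hβμ : β ≤ μ := min_le_left _ _
  have hβν : β < ν := lt_of_le_of_lt hβμ hμν
  -- algebraic identities clearing denominators
  have F1 : ν*(ν/γ-1)*γ = ν*(ν-γ) := by field_simp; try ring
  have F2 : (ν^2/γ - 3*ν + 2)*γ = ν^2 - 3*ν*γ + 2*γ := by field_simp; try ring
  -- key1 : β < ν*(1-γ)/γ  (equivalently β*γ < ν*(1-γ))
  have key1' : β*γ < ν*(1-γ) := by
    rcases lt_or_ge ν 1 with hν1 | hν1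
    · have h1 : β*γ ≤ ν*(ν/γ-1)*γ :=
        mul_le_mul_of_nonneg_right (min_le_right _ _) hγ0.le
      rw [F1] at h1
      nlinarith
    · have hν1 : ν = 1 := le_antisymm hν hν1
      have h1 : β*γ ≤ μ*γ := mul_le_mul_of_nonneg_right hβμ hγ0.le
      have h2 : μ*γ < (ν^2/γ - 3*ν + 2)*γ := mul_lt_mul_of_pos_right hμX hγ0
      rw [F2] at h2
      rw [hν1] at h2 ⊢
      nlinarith
  have key1 : β < ν*(1-γ)/γ := (lt_div_iff₀ hγ0).2 key1'
  -- key2 : β < 2*ν*(1-γ)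
  have key2 : β < 2*ν*(1-γ) := by
    rcases lt_or_ge (ν*(ν-γ)) (2*ν*(1-γ)*γ) with hc | hc
    · have h1 : β*γ ≤ ν*(ν/γ-1)*γ :=
        mul_le_mul_of_nonneg_right (min_le_right _ _) hγ0.le
      rw [F1] at h1
      have : β*γ < 2*ν*(1-γ)*γ := lt_of_le_of_lt h1 hc
      exact lt_of_mul_lt_mul_right this hγ0.le
    · -- regime: ν ≥ 3γ - 2γ²
      have hreg : 3*γ - 2*γ^2 ≤ ν := by nlinarith
      have hprod1 : (0:ℝ) ≤ (ν - (3*γ - 2*γ^2))*(1-ν) := by nlinarith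
      have hprod2 : (0:ℝ) ≤ (2*γ-1)*(ν-γ) := by nlinarith
      have hq : ν^2 - 3*ν*γ + 2*γ ≤ 2*ν*(1-γ)*γ := by nlinarith
      have h2 : μ*γ < (ν^2/γ - 3*ν + 2)*γ := mul_lt_mul_of_pos_right hμX hγ0
      rw [F2] at h2
      have h3 : β*γ ≤ μ*γ := mul_le_mul_of_nonneg_right hβμ hγ0.le
      have : β*γ < 2*ν*(1-γ)*γ := by linarith
      exact lt_of_mul_lt_mul_right this hγ0.le
  -- the exponents
  set a := ν/(2*γ) with hadef
  have ha0 : 0 < a := by positivity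
  have ha1 : a ≤ 1 := by rw [hadef, div_le_one (by positivity)]; linarith
  have h2γa : 2*γ*a = ν := by rw [hadef]; field_simp
  set σ := max 0 (β/(1-γ) - ν) with hσdef
  have hσ0 : 0 ≤ σ := le_max_left _ _
  have hσν : σ < ν := by
    apply max_lt hν0
    have : β/(1-γ) < 2*ν := (div_lt_iff₀ hγ1').2 (by nlinarith)
    linarith
  have hσlt' : σ < ν*(1-γ)/γ := by
    apply max_lt (by positivity)
    have h1 : β/(1-γ) < ν/γ := (div_lt_div_iff₀ hγ1' hγ0).2 (by nlinarith [key1'])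
    have e : ν*(1-γ)/γ + ν = ν/γ := by field_simp; try ring
    linarith [h1, e]
  have hσlt : σ*γ < ν*(1-γ) := by
    have h := mul_lt_mul_of_pos_right hσlt' hγ0
    have e : (ν*(1-γ)/γ)*γ = ν*(1-γ) := by field_simp
    linarith
  set ρ := a - (ν+σ)/2 with hρdef
  have hρ0 : 0 < ρ := by
    rw [hρdef, hadef, sub_pos, div_lt_div_iff₀ (by norm_num : (0:ℝ) < 2) (by positivity : (0:ℝ) < 2*γ)]
    nlinarith [hσlt]
  have hνσ : (0:ℝ) < ν^2 - σ^2 := by nlinarith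
  have hνβ : (0:ℝ) < ν^2 - β^2 := by nlinarith
  set c₂ := ρ/(2*(ν^2-σ^2)) with hc₂def
  have hc₂0 : 0 < c₂ := by positivity
  set N := (2*a/ρ) * (max 1 c₂)^((ν+σ)/2) with hNdef
  have hmax0 : (0:ℝ) < max 1 c₂ := lt_max_of_lt_left one_pos
  have hN0 : 0 < N := by
    rw [hNdef]
    exact mul_pos (div_pos (by linarith) hρ0) (rpow_pos_of_pos hmax0 _)
  have hN : a*c₂^((ν+σ)/2) ≤ N*ρ/2 := by
    have e : N*ρ/2 = a*(max 1 c₂)^((ν+σ)/2) := by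
      rw [hNdef]; field_simp
    rw [e]
    apply mul_le_mul_of_nonneg_left _ ha0.le
    exact Real.rpow_le_rpow hc₂0.le (le_max_right _ _) (by positivity)
  set K := (1 + a*c₂^(a-1) + N*(ν^2-σ^2))/(ν^2-β^2) + N + 1 with hKdef
  have hK1 : 1 + a*c₂^(a-1) + N*(ν^2-σ^2) ≤ K*(ν^2-β^2) := by
    have e : K*(ν^2-β^2) = (1 + a*c₂^(a-1) + N*(ν^2-σ^2)) + (N+1)*(ν^2-β^2) := by
      rw [hKdef]; field_simp; ring
    rw [e]
    nlinarith [mul_pos (by linarith : (0:ℝ) < N+1) hνβ]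
  have hKN : N + 1 ≤ K := by
    rw [hKdef]
    have : (0:ℝ) ≤ (1 + a*c₂^(a-1) + N*(ν^2-σ^2))/(ν^2-β^2) := by
      apply div_nonneg _ hνβ.le
      have := mul_pos ha0 (rpow_pos_of_pos hc₂0 (a-1))
      nlinarith [mul_pos hN0 hνσ]
    linarith
  -- hE4 : β ≤ 2γρ + σ
  have e4 : 2*γ*ρ + σ = (1-γ)*(ν+σ) := by
    rw [hρdef, hadef]; field_simp; ring
  have hE4 : β ≤ 2*γ*ρ + σ := by
    rw [e4]
    rcases le_or_gt (β/(1-γ) - ν) 0 with h | h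
    · have hσeq : σ = 0 := max_eq_left h
      have : β/(1-γ) ≤ ν := by linarith
      have : β ≤ ν*(1-γ) := by
        have := (div_le_iff₀ hγ1').1 this
        linarith
      rw [hσeq]; linarith
    · have hσeq : σ = β/(1-γ) - ν := max_eq_right h.le
      have e : (1-γ)*(ν+(β/(1-γ)-ν)) = β := by field_simp; try ring
      rw [hσeq, e]
  -- hE5 : β ≤ 2a - ν
  have hE5 : β ≤ 2*a - ν := by
    have e5 : 2*a - ν = ν*(1-γ)/γ := by rw [hadef]; field_simp; try ring
    rw [e5]; linarith
  exact ⟨β, a, σ, ρ, c₂, N, K, rfl, hν0, hβ0, hβν, hβμ, ha0, ha1, hσ0, hσν, hρ0, hγ0,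
    rfl, rfl, hN, hN0, hK1, hE4, hE5, hKN, rfl, h2γa⟩

lemma hasDerivAt_fourterm (c₁ c₂ c₃ c₄ p₁ p₂ p₃ p₄ : ℝ) {x : ℝ} (hx : x ≠ 0) :
    HasDerivAt (fun y : ℝ => c₁*y^p₁ + c₂*y^p₂ + c₃*y^p₃ - c₄*y^p₄)
      ((c₁*p₁)*x^(p₁-1) + (c₂*p₂)*x^(p₂-1) + (c₃*p₃)*x^(p₃-1) - (c₄*p₄)*x^(p₄-1)) x := by
  have H : ∀ c p : ℝ, HasDerivAt (fun y : ℝ => c*y^p) ((c*p)*x^(p-1)) x := by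
    intro c p
    have h := (Real.hasDerivAt_rpow_const (p := p) (x := x) (Or.inl hx)).const_mul c
    exact h.congr_deriv (by ring)
  exact (((H c₁ p₁).add (H c₂ p₂)).add (H c₃ p₃)).sub (H c₄ p₄)

lemma hasDerivAt_twoterm (c₁ c₂ p₁ p₂ : ℝ) {x : ℝ} (hx : x ≠ 0) :
    HasDerivAt (fun y : ℝ => c₁*y^p₁ + c₂*y^p₂)
      ((c₁*p₁)*x^(p₁-1) + (c₂*p₂)*x^(p₂-1)) x := by
  have H : ∀ c p : ℝ, HasDerivAt (fun y : ℝ => c*y^p) ((c*p)*x^(p-1)) x := by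
    intro c p
    have h := (Real.hasDerivAt_rpow_const (p := p) (x := x) (Or.inl hx)).const_mul c
    exact h.congr_deriv (by ring)
  exact (H c₁ p₁).add (H c₂ p₂)

lemma hasDerivAt_timeterm (a ρ ν σ cR cK N x β : ℝ) {t : ℝ} (ht : t < 1) :
    HasDerivAt (fun s : ℝ => (1-s)^a * x^(-ν) + cR * x^(-ν) + cK * x^β - N*(1-s)^ρ*x^σ)
      (N*(ρ*(1-t)^(ρ-1))*x^σ - (a*(1-t)^(a-1))*x^(-ν)) t := by
  have h0 : HasDerivAt (fun s : ℝ => 1 - s) (-1) t := (hasDerivAt_id t).const_sub 1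
  have hne : (1:ℝ) - t ≠ 0 := by intro h; linarith [h.ge]
  have h1 : HasDerivAt (fun s : ℝ => (1-s)^a) ((-1)*a*(1-t)^(a-1)) t :=
    h0.rpow_const (Or.inl hne)
  have h2 : HasDerivAt (fun s : ℝ => (1-s)^ρ) ((-1)*ρ*(1-t)^(ρ-1)) t :=
    h0.rpow_const (Or.inl hne)
  have h3 := (((h1.mul_const (x^(-ν))).add_const (cR * x^(-ν))).add_const (cK * x^β)).sub
    ((h2.const_mul N).mul_const (x^σ))
  exact h3.congr_deriv (by ring)

set_option maxHeartbeats 1000000 in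
/-- Proposition 5.3: comparison estimate on the trapezoidal region
`Ω_γ = {(r,t) ∈ [R,1]×[0,T) : 1−t ≤ r^{2γ} ≤ 1}`.  If `g` satisfies
`(∂_t − Δ_ν) g ≤ A r^{μ−2}` in `Ω_γ` (with `Δ_ν = ∂_r² + r⁻¹∂_r − ν²r⁻²`) and `g ≤ A` on
the parabolic boundary `{r = 1} ∪ {r = λ^{R,1}_γ(t)}`, where
`λ^{R,1}_γ(t) = max[R, (1−t)₊^{1/(2γ)}]`, then
`g(r,t) ≤ C_{μ,ν} A ((λ^{R,1}_γ(t)/r)^ν + r^{min[μ, ν(ν/γ−1)]})` on `Ω_γ`. -/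
theorem stmt15 (γ ν μ : ℝ) (hγ : 1 / 2 ≤ γ) (hγν : γ < ν) (hν : ν ≤ 1)
    (hμ0 : 0 < μ) (hμ : μ < min ν (ν ^ 2 / γ - 3 * ν + 2)) :
    ∃ C > (0 : ℝ), ∀ (R T A : ℝ) (g : ℝ → ℝ → ℝ),
      0 < R → R < 1 → 1 < T → 0 ≤ A →
      ContinuousOn (fun p : ℝ × ℝ => g p.1 p.2)
        {p : ℝ × ℝ | R ≤ p.1 ∧ p.1 ≤ 1 ∧ 0 ≤ p.2 ∧ p.2 < T ∧
          1 - p.2 ≤ p.1 ^ (2 * γ) ∧ p.1 ^ (2 * γ) ≤ 1} →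
      (∀ r t : ℝ, DifferentiableAt ℝ (fun t' => g r t') t) →
      (∀ t : ℝ, ContDiff ℝ 2 (fun r' => g r' t)) →
      (∀ r t : ℝ, R ≤ r → r ≤ 1 → 0 ≤ t → t < T →
        1 - t ≤ r ^ (2 * γ) → r ^ (2 * γ) ≤ 1 →
        deriv (fun t' => g r t') t -
            (deriv (deriv (fun r' => g r' t)) r
              + r⁻¹ * deriv (fun r' => g r' t) r - ν ^ 2 / r ^ 2 * g r t) ≤
          A * r ^ (μ - 2)) →
      (∀ t : ℝ, 0 ≤ t → t < T →
        g 1 t ≤ A ∧ g (max R ((max (1 - t) 0) ^ (1 / (2 * γ)))) t ≤ A) →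
      ∀ r t : ℝ, R ≤ r → r ≤ 1 → 0 ≤ t → t < T →
        1 - t ≤ r ^ (2 * γ) → r ^ (2 * γ) ≤ 1 →
        g r t ≤ C * A *
          ((max R ((max (1 - t) 0) ^ (1 / (2 * γ))) / r) ^ ν
            + r ^ min μ (ν * (ν / γ - 1))) := by
  obtain ⟨β, a, σ, ρ, c₂, N, K, hβdef, hν0, hβ0, hβν, hβμ, ha0, ha1, hσ0, hσν, hρ0, hγ0,
    hρdef, hc₂def, hN, hN0, hK1, hE4, hE5, hKN, hadef, h2γa⟩ :=
    constants_pack γ ν μ hγ hγν hν hμ0 hμ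
  have hγpos : (0:ℝ) < 2*γ := by linarith
  have hKone : (1:ℝ) ≤ K := by linarith
  have hK0 : (0:ℝ) < K := by linarith
  have hKnub : (1:ℝ) ≤ K*(ν^2-β^2) := by
    have hνσ : (0:ℝ) < ν^2 - σ^2 := by nlinarith
    have hc₂0 : (0:ℝ) < c₂ := by rw [hc₂def]; positivity
    have h1 := mul_pos ha0 (rpow_pos_of_pos hc₂0 (a-1))
    have h2 := mul_pos hN0 hνσ
    linarith
  refine ⟨2*K, by linarith, ?_⟩
  intro R T A g hR0 hR1 hT hA hcont hd hc2 hpde hb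
  have Hsup := supersol_ineq γ ν μ β a σ ρ c₂ N K hν0 hβ0 hβν hβμ ha0 ha1 hσ0 hσν hρ0 hγ0
      hρdef hc₂def hN hN0 hK1 hE4 hE5
  set Ω : Set (ℝ × ℝ) := {p : ℝ × ℝ | R ≤ p.1 ∧ p.1 ≤ 1 ∧ 0 ≤ p.2 ∧ p.2 < T ∧
      1 - p.2 ≤ p.1 ^ (2 * γ) ∧ p.1 ^ (2 * γ) ≤ 1} with hΩdef
  set v : ℝ → ℝ → ℝ :=
    fun y s => (1-s)^a * y^(-ν) + R^ν * y^(-ν) + K * y^β - N*(1-s)^ρ*y^σ with hvdef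
  set vr : ℝ → ℝ → ℝ := fun s y =>
    ((1-s)^a*(-ν))*y^(-ν-1) + (R^ν*(-ν))*y^(-ν-1) + (K*β)*y^(β-1)
      - ((N*(1-s)^ρ)*σ)*y^(σ-1) with hvrdef
  set vrr : ℝ → ℝ → ℝ := fun s y =>
    (((1-s)^a*(-ν))*(-ν-1))*y^(-ν-1-1) + ((R^ν*(-ν))*(-ν-1))*y^(-ν-1-1)
      + ((K*β)*(β-1))*y^(β-1-1) - (((N*(1-s)^ρ)*σ)*(σ-1))*y^(σ-1-1) with hvrrdef
  have hRν : (0:ℝ) < R^ν := rpow_pos_of_pos hR0 _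
  -- regularity of g slices
  have hgdiff : ∀ t : ℝ, Differentiable ℝ (fun y => g y t) := by
    intro t; exact (hc2 t).differentiable (by norm_num)
  have hgderiv : ∀ t : ℝ, Differentiable ℝ (deriv (fun y => g y t)) := by
    intro t
    have h := hc2 t
    rw [show (2 : WithTop ℕ∞) = 1 + 1 by norm_num] at h
    exact ((contDiff_succ_iff_deriv.mp h).2.2).differentiable one_ne_zero
  -- derivatives of the barrier
  have Hvt : ∀ x t' : ℝ, t' < 1 → HasDerivAt (fun s => v x s)
      (N*(ρ*(1-t')^(ρ-1))*x^σ - (a*(1-t')^(a-1))*x^(-ν)) t' := by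
    intro x t' h
    exact hasDerivAt_timeterm a ρ ν σ (R^ν) K N x β h
  have Hvr : ∀ t' x : ℝ, x ≠ 0 → HasDerivAt (fun y => v y t') (vr t' x) x := by
    intro t' x hx
    exact hasDerivAt_fourterm ((1-t')^a) (R^ν) K (N*(1-t')^ρ) (-ν) (-ν) β σ hx
  have Hvrr : ∀ t' x : ℝ, x ≠ 0 → HasDerivAt (vr t') (vrr t' x) x := by
    intro t' x hx
    exact hasDerivAt_fourterm ((1-t')^a*(-ν)) (R^ν*(-ν)) (K*β) ((N*(1-t')^ρ)*σ)
      (-ν-1) (-ν-1) (β-1) (σ-1) hx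
  -- derivative decompositions of w = g - A v
  have derivW : ∀ t' x : ℝ, x ≠ 0 → deriv (fun y => g y t' - A * v y t') x
      = deriv (fun y => g y t') x - A * vr t' x := by
    intro t' x hx
    exact (((hgdiff t' x).hasDerivAt).sub ((Hvr t' x hx).const_mul A)).deriv
  have derivW2 : ∀ t' x : ℝ, x ≠ 0 → deriv (deriv (fun y => g y t' - A * v y t')) x
      = deriv (deriv (fun y => g y t')) x - A * vrr t' x := by
    intro t' x hx
    have hev : deriv (fun y => g y t' - A * v y t')
        =ᶠ[𝓝 x] fun y => deriv (fun z => g z t') y - A * vr t' y := by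
      filter_upwards [isOpen_compl_singleton.mem_nhds hx] with y hy
      exact derivW t' y hy
    rw [hev.deriv_eq]
    exact (((hgderiv t' x).hasDerivAt).sub ((Hvrr t' x hx).const_mul A)).deriv
  -- the Bessel-operator identity for the barrier
  have ID : ∀ t' x : ℝ, (0:ℝ) < x →
      vrr t' x + x⁻¹ * vr t' x - ν^2/x^2 * v x t'
        = -(K*(ν^2-β^2)*x^(β-2)) + N*(ν^2-σ^2)*(1-t')^ρ*x^(σ-2) := by
    intro t' x hx
    have Ea1 : x^(-ν-1-1) = x^(-ν-2) := by congr 1; ring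
    have Ea2 : x⁻¹*x^(-ν-1) = x^(-ν-2) := by
      rw [← Real.rpow_neg_one x, ← Real.rpow_add hx]; congr 1; ring
    have Ea3 : x^(-ν)/x^2 = x^(-ν-2) := by
      rw [← Real.rpow_natCast x 2, ← Real.rpow_sub hx]; norm_num
    have Eb1 : x^(β-1-1) = x^(β-2) := by congr 1; ring
    have Eb2 : x⁻¹*x^(β-1) = x^(β-2) := by
      rw [← Real.rpow_neg_one x, ← Real.rpow_add hx]; congr 1; ring
    have Eb3 : x^β/x^2 = x^(β-2) := by
      rw [← Real.rpow_natCast x 2, ← Real.rpow_sub hx]; norm_num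
    have Ec1 : x^(σ-1-1) = x^(σ-2) := by congr 1; ring
    have Ec2 : x⁻¹*x^(σ-1) = x^(σ-2) := by
      rw [← Real.rpow_neg_one x, ← Real.rpow_add hx]; congr 1; ring
    have Ec3 : x^σ/x^2 = x^(σ-2) := by
      rw [← Real.rpow_natCast x 2, ← Real.rpow_sub hx]; norm_num
    simp only [hvdef, hvrdef, hvrrdef]
    linear_combination ((((1:ℝ)-t')^a*(-ν))*(-ν-1) + (R^ν*(-ν))*(-ν-1))*Ea1
      + (((1:ℝ)-t')^a*(-ν) + R^ν*(-ν))*Ea2 - ν^2*(((1:ℝ)-t')^a + R^ν)*Ea3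
      + ((K*β)*(β-1))*Eb1 + (K*β)*Eb2 - ν^2*K*Eb3
      - (((N*((1:ℝ)-t')^ρ)*σ)*(σ-1))*Ec1 - ((N*((1:ℝ)-t')^ρ)*σ)*Ec2
      + ν^2*(N*((1:ℝ)-t')^ρ)*Ec3
  -- boundary lower bounds for the barrier
  have hv_bnd1 : ∀ s : ℝ, 0 ≤ s → s < 1 → 1 ≤ v 1 s := by
    intro s h0 h1
    have e : v 1 s = (1-s)^a + R^ν + K - N*(1-s)^ρ := by
      simp only [hvdef, Real.one_rpow, mul_one]
    rw [e]
    have h2 : (1-s)^ρ ≤ 1 := rpow_le_one (by linarith) (by linarith) hρ0.le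
    have h3 : N*(1-s)^ρ ≤ N*1 := mul_le_mul_of_nonneg_left h2 hN0.le
    have h4 : (0:ℝ) ≤ (1-s)^a := rpow_nonneg (by linarith) _
    linarith
  have hv_bnd2 : ∀ s : ℝ, 0 ≤ s → s < 1 → 1 ≤ v (max R ((max (1-s) 0)^(1/(2*γ)))) s := by
    intro s h0 h1
    set l := max R ((max (1-s) 0)^(1/(2*γ))) with hldef
    have hm0 : (0:ℝ) ≤ max (1-s) 0 := le_max_right _ _
    have hl0 : (0:ℝ) < l := lt_of_lt_of_le hR0 (le_max_left _ _)
    have hl1 : l ≤ 1 := by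
      apply max_le hR1.le
      exact rpow_le_one hm0 (max_le (by linarith) zero_le_one) (by positivity)
    have hml : 1-s ≤ l^(2*γ) := by
      have h2 : (max (1-s) 0)^(1/(2*γ)) ≤ l := le_max_right _ _
      have h3 : ((max (1-s) 0)^(1/(2*γ)))^(2*γ) ≤ l^(2*γ) :=
        rpow_le_rpow (rpow_nonneg hm0 _) h2 (by linarith)
      rw [← Real.rpow_mul hm0, show (1/(2*γ))*(2*γ) = 1 by field_simp, Real.rpow_one] at h3
      exact le_trans (le_max_left _ _) h3
    have hNK : N*(1-s)^ρ*l^σ ≤ K*l^β := by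
      have u1 : (1-s)^ρ ≤ (l^(2*γ))^ρ := rpow_le_rpow (by linarith) hml hρ0.le
      have u2 : (l^(2*γ))^ρ = l^(2*γ*ρ) := by rw [← Real.rpow_mul hl0.le]
      have u3 : l^(2*γ*ρ)*l^σ = l^(2*γ*ρ+σ) := (Real.rpow_add hl0 _ _).symm
      have u4 : l^(2*γ*ρ+σ) ≤ l^β := rpow_le_rpow_of_exponent_ge hl0 hl1 hE4
      have hlσ : (0:ℝ) ≤ l^σ := rpow_nonneg hl0.le _
      calc N*(1-s)^ρ*l^σ ≤ N*l^(2*γ*ρ)*l^σ := by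
            rw [u2] at u1
            exact mul_le_mul_of_nonneg_right (mul_le_mul_of_nonneg_left u1 hN0.le) hlσ
        _ = N*l^(2*γ*ρ+σ) := by rw [mul_assoc, u3]
        _ ≤ N*l^β := mul_le_mul_of_nonneg_left u4 hN0.le
        _ ≤ K*l^β := mul_le_mul_of_nonneg_right (by linarith) (rpow_nonneg hl0.le _)
    have hmain : 1 ≤ (1-s)^a*l^(-ν) + R^ν*l^(-ν) := by
      rcases le_total ((max (1-s) 0)^(1/(2*γ))) R with hc | hc
      · have hleq : l = R := max_eq_left hc
        have e1 : R^ν*l^(-ν) = 1 := by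
          rw [hleq, ← Real.rpow_add hR0]; simp
        have e2 : (0:ℝ) ≤ (1-s)^a*l^(-ν) :=
          mul_nonneg (rpow_nonneg (by linarith) _) (rpow_nonneg hl0.le _)
        linarith
      · have hleq : l = (max (1-s) 0)^(1/(2*γ)) := max_eq_right hc
        have hmeq : max (1-s) 0 = 1-s := max_eq_left (by linarith)
        have hl2γ : l^(2*γ) = 1-s := by
          rw [hleq, hmeq, ← Real.rpow_mul (by linarith : (0:ℝ) ≤ 1-s),
            show (1/(2*γ))*(2*γ) = 1 by field_simp, Real.rpow_one]
        have e0 : (l^(2*γ))^a = l^ν := by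
          rw [← Real.rpow_mul hl0.le, h2γa]
        have e1 : (1-s)^a*l^(-ν) = 1 := by
          rw [← hl2γ, e0, ← Real.rpow_add hl0]; simp
        have e2 : (0:ℝ) ≤ R^ν*l^(-ν) := mul_nonneg hRν.le (rpow_nonneg hl0.le _)
        linarith
    have hfin : v l s = (1-s)^a*l^(-ν) + R^ν*l^(-ν) + K*l^β - N*(1-s)^ρ*l^σ := by
      simp only [hvdef]
    rw [hfin]
    linarith
  -- size bound for the barrier
  have hsize : ∀ x s : ℝ, R ≤ x → x ≤ 1 → 0 ≤ s → s < 1 →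
      v x s ≤ 2*K*((max R ((max (1-s) 0)^(1/(2*γ)))/x)^ν + x^β) := by
    intro x s hx hx1 h0 h1
    have hx0 : (0:ℝ) < x := lt_of_lt_of_le hR0 hx
    set l := max R ((max (1-s) 0)^(1/(2*γ))) with hldef
    have hm0 : (0:ℝ) ≤ max (1-s) 0 := le_max_right _ _
    have hl0 : (0:ℝ) < l := lt_of_lt_of_le hR0 (le_max_left _ _)
    have h1a : (1-s)^a ≤ l^ν := by
      have hmeq : max (1-s) 0 = 1-s := max_eq_left (by linarith)
      have h2 : (max (1-s) 0)^(1/(2*γ)) ≤ l := le_max_right _ _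
      have h3 : ((max (1-s) 0)^(1/(2*γ)))^ν ≤ l^ν :=
        rpow_le_rpow (rpow_nonneg hm0 _) h2 hν0.le
      have h4 : ((max (1-s) 0)^(1/(2*γ)))^ν = (1-s)^a := by
        rw [hmeq, ← Real.rpow_mul (by linarith : (0:ℝ) ≤ 1-s)]
        rw [hadef]
        congr 1
        field_simp
      rw [← h4]; exact h3
    have h1b : R^ν ≤ l^ν := rpow_le_rpow hR0.le (le_max_left _ _) hν0.le
    have hxν : (0:ℝ) ≤ x^(-ν) := rpow_nonneg hx0.le _
    have hNterm : (0:ℝ) ≤ N*(1-s)^ρ*x^σ :=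
      mul_nonneg (mul_nonneg hN0.le (rpow_nonneg (by linarith) _)) (rpow_nonneg hx0.le _)
    have hlr : l^ν*x^(-ν) = (l/x)^ν := by
      rw [div_rpow hl0.le hx0.le, Real.rpow_neg hx0.le, div_eq_mul_inv]
    have hv : v x s = (1-s)^a*x^(-ν) + R^ν*x^(-ν) + K*x^β - N*(1-s)^ρ*x^σ := by
      simp only [hvdef]
    have hlx : (0:ℝ) ≤ (l/x)^ν := rpow_nonneg (by positivity) _
    have hxβ : (0:ℝ) ≤ x^β := rpow_nonneg hx0.le _
    rw [hv]
    have c1 : (1-s)^a*x^(-ν) ≤ (l/x)^ν := by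
      rw [← hlr]; exact mul_le_mul_of_nonneg_right h1a hxν
    have c2 : R^ν*x^(-ν) ≤ (l/x)^ν := by
      rw [← hlr]; exact mul_le_mul_of_nonneg_right h1b hxν
    have e1 : 2*K*((l/x)^ν + x^β) = (2*K)*(l/x)^ν + (2*K)*x^β := by ring
    have f1 : 2*(l/x)^ν ≤ (2*K)*(l/x)^ν :=
      mul_le_mul_of_nonneg_right (by linarith) hlx
    have f2 : K*x^β ≤ (2*K)*x^β :=
      mul_le_mul_of_nonneg_right (by linarith) hxβ
    linarith [c1, c2, hNterm, f1, f2, e1]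
  -- Phase 1 : comparison for t < 1
  have hvcont : ContinuousOn (fun p : ℝ × ℝ => v p.1 p.2) {p : ℝ×ℝ | 0 < p.1} := by
    simp only [hvdef]
    have c1 : Continuous fun p : ℝ×ℝ => (1-p.2)^a :=
      (Real.continuous_rpow_const ha0.le).comp (continuous_const.sub continuous_snd)
    have c2 : Continuous fun p : ℝ×ℝ => (1-p.2)^ρ :=
      (Real.continuous_rpow_const hρ0.le).comp (continuous_const.sub continuous_snd)
    have cν : ContinuousOn (fun p : ℝ×ℝ => p.1^(-ν)) {p : ℝ×ℝ | 0 < p.1} :=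
      ContinuousOn.rpow_const (continuous_fst.continuousOn) (fun p hp => Or.inl (ne_of_gt hp))
    have cβ : ContinuousOn (fun p : ℝ×ℝ => p.1^β) {p : ℝ×ℝ | 0 < p.1} :=
      ContinuousOn.rpow_const (continuous_fst.continuousOn) (fun p hp => Or.inl (ne_of_gt hp))
    have cσ : ContinuousOn (fun p : ℝ×ℝ => p.1^σ) {p : ℝ×ℝ | 0 < p.1} :=
      ContinuousOn.rpow_const (continuous_fst.continuousOn) (fun p hp => Or.inl (ne_of_gt hp))
    exact (((c1.continuousOn.mul cν).add (continuousOn_const.mul cν)).add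
      (continuousOn_const.mul cβ)).sub (((continuous_const.mul c2).continuousOn).mul cσ)
  clear_value v vr vrr
  have Hph1 : ∀ r t : ℝ, R ≤ r → r ≤ 1 → 0 ≤ t → t < 1 → 1 - t ≤ r^(2*γ) →
      g r t ≤ A * v r t := by
    intro r t hr hr1 ht0 ht1 h1t
    have hr0 : (0:ℝ) < r := lt_of_lt_of_le hR0 hr
    set lam : ℝ → ℝ := fun s => max R ((max (1-s) 0)^(1/(2*γ))) with hlamdef
    have hlamcont : Continuous lam := by
      apply continuous_const.max
      exact (Real.continuous_rpow_const (by positivity)).comp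
        ((continuous_const.sub continuous_id).max continuous_const)
    have hlam0 : ∀ s : ℝ, 0 < lam s := fun s => lt_of_lt_of_le hR0 (le_max_left _ _)
    have hlamr : ∀ s x : ℝ, lam s ≤ x → 1 - s ≤ x^(2*γ) := by
      intro s x hlx
      have hm0 : (0:ℝ) ≤ max (1-s) 0 := le_max_right _ _
      have h2 : (max (1-s) 0)^(1/(2*γ)) ≤ x := le_trans (le_max_right _ _) hlx
      have h3 : ((max (1-s) 0)^(1/(2*γ)))^(2*γ) ≤ x^(2*γ) :=
        rpow_le_rpow (rpow_nonneg hm0 _) h2 (by linarith)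
      rw [← Real.rpow_mul hm0, show (1/(2*γ))*(2*γ) = 1 by field_simp, Real.rpow_one] at h3
      exact le_trans (le_max_left _ _) h3
    have hlamt : lam t ≤ r := by
      apply max_le hr
      have hm : max (1-t) 0 ≤ r^(2*γ) := max_le h1t (rpow_nonneg hr0.le _)
      have h3 : (max (1-t) 0)^(1/(2*γ)) ≤ (r^(2*γ))^(1/(2*γ)) :=
        rpow_le_rpow (le_max_right _ _) hm (by positivity)
      rwa [← Real.rpow_mul hr0.le, show (2*γ)*(1/(2*γ)) = 1 by field_simp,
        Real.rpow_one] at h3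
    have hsub : {p : ℝ×ℝ | 0 ≤ p.2 ∧ p.2 ≤ t ∧ lam p.2 ≤ p.1 ∧ p.1 ≤ 1} ⊆ Ω := by
      rintro ⟨y, s⟩ ⟨hs0, hst, hly, hy1⟩
      have hy0 : (0:ℝ) < y := lt_of_lt_of_le (hlam0 s) hly
      exact ⟨le_trans (le_max_left _ _) hly, hy1, hs0, by linarith,
        hlamr s y hly, rpow_le_one hy0.le hy1 (by linarith)⟩
    have hwcont : ContinuousOn (fun p : ℝ×ℝ => g p.1 p.2 - A * v p.1 p.2)
        {p : ℝ×ℝ | 0 ≤ p.2 ∧ p.2 ≤ t ∧ lam p.2 ≤ p.1 ∧ p.1 ≤ 1} := by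
      apply ContinuousOn.sub (hcont.mono hsub)
      apply ContinuousOn.mul continuousOn_const
      apply hvcont.mono
      rintro ⟨y, s⟩ ⟨_, _, hly, _⟩
      exact lt_of_lt_of_le (hlam0 s) hly
    have hb1 : ∀ s : ℝ, 0 ≤ s → s ≤ t → g 1 s - A * v 1 s ≤ 0 := by
      intro s hs0 hst
      have hgb := (hb s hs0 (by linarith)).1
      have hvb := hv_bnd1 s hs0 (by linarith)
      have := mul_le_mul_of_nonneg_left hvb hA
      linarith
    have hb2 : ∀ s : ℝ, 0 ≤ s → s ≤ t → g (lam s) s - A * v (lam s) s ≤ 0 := by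
      intro s hs0 hst
      have hgb := (hb s hs0 (by linarith)).2
      have hvb := hv_bnd2 s hs0 (by linarith)
      have := mul_le_mul_of_nonneg_left hvb hA
      simp only [hlamdef]
      linarith
    have hinit : ∀ y : ℝ, lam 0 ≤ y → y ≤ 1 → g y 0 - A * v y 0 ≤ 0 := by
      have hlam0eq : lam 0 = 1 := by
        simp only [hlamdef]
        rw [show (1:ℝ)-0 = 1 by norm_num, max_eq_left zero_le_one, Real.one_rpow,
          max_eq_right hR1.le]
      intro y h1 h2
      have : y = 1 := le_antisymm h2 (by rw [hlam0eq] at h1; exact h1)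
      rw [this]
      exact hb1 0 le_rfl ht0
    have hdt : ∀ y s : ℝ, 0 < s → s ≤ t → lam s < y → y < 1 →
        DifferentiableAt ℝ (fun s' => g y s' - A * v y s') s := by
      intro y s hs0 hst _ _
      exact (hd y s).sub ((Hvt y s (by linarith)).differentiableAt.const_mul A)
    have hdr : ∀ y s : ℝ, 0 < s → s ≤ t → lam s < y → y < 1 →
        (∀ᶠ z in 𝓝 y, DifferentiableAt ℝ (fun x => g x s - A * v x s) z) ∧
        DifferentiableAt ℝ (deriv (fun x => g x s - A * v x s)) y := by
      intro y s _ _ hly _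
      have hy0 : (0:ℝ) < y := lt_trans (hlam0 s) hly
      constructor
      · filter_upwards [isOpen_compl_singleton.mem_nhds hy0.ne'] with z hz
        exact (hgdiff s z).sub ((Hvr s z hz).differentiableAt.const_mul A)
      · have hev : deriv (fun x => g x s - A * v x s)
            =ᶠ[𝓝 y] fun z => deriv (fun q => g q s) z - A * vr s z := by
          filter_upwards [isOpen_compl_singleton.mem_nhds hy0.ne'] with z hz
          exact derivW s z hz
        rw [hev.differentiableAt_iff]
        exact (hgderiv s y).sub ((Hvrr s y hy0.ne').differentiableAt.const_mul A)
    have hkey : ∀ x s : ℝ, 0 < s → s ≤ t → lam s < x → x < 1 →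
        0 < g x s - A * v x s →
        0 ≤ deriv (fun s' => g x s' - A * v x s') s →
        deriv (fun y => g y s - A * v y s) x = 0 →
        deriv (deriv (fun y => g y s - A * v y s)) x ≤ 0 → False := by
      intro x s hs0 hst hlx hx1 hw0 htime hsp1 hsp2
      have hx0 : (0:ℝ) < x := lt_trans (hlam0 s) hlx
      have hs1 : s < 1 := lt_of_le_of_lt hst ht1
      have hss : (0:ℝ) < 1 - s := by linarith
      have h2γx : 1 - s ≤ x^(2*γ) := hlamr s x hlx.le
      have hx2γ1 : x^(2*γ) ≤ 1 := rpow_le_one hx0.le hx1.le (by linarith)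
      have hRx : R ≤ x := le_trans (le_max_left _ _) hlx.le
      have hDt : deriv (fun s' => g x s' - A * v x s') s
          = deriv (fun s' => g x s') s
            - A * (N*(ρ*(1-s)^(ρ-1))*x^σ - (a*(1-s)^(a-1))*x^(-ν)) :=
        (((hd x s).hasDerivAt).sub ((Hvt x s hs1).const_mul A)).deriv
      rw [hDt] at htime
      rw [derivW s x hx0.ne'] at hsp1
      rw [derivW2 s x hx0.ne'] at hsp2
      have hPDE := hpde x s hRx hx1.le hs0.le (by linarith) h2γx hx2γ1
      have hSUP := Hsup (1-s) x hss hx0 hx1.le h2γx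
      have hIDv := ID s x hx0
      set Gt := deriv (fun s' => g x s') s with hGtdef
      set Gr := deriv (fun y => g y s) x with hGrdef
      set Grr := deriv (deriv (fun y => g y s)) x with hGrrdef
      have hGr : Gr = A * vr s x := by linarith [hsp1]
      have h5 : x⁻¹*Gr = A*(x⁻¹*vr s x) := by rw [hGr]; ring
      have hVTsub : x^(μ-2) ≤ (N*(ρ*(1-s)^(ρ-1))*x^σ - (a*(1-s)^(a-1))*x^(-ν))
          - (vrr s x + x⁻¹*vr s x - ν^2/x^2 * v x s) := by
        rw [hIDv]
        linarith [hSUP]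
      have hAmul := mul_le_mul_of_nonneg_left hVTsub hA
      have hexp : A*((N*(ρ*(1-s)^(ρ-1))*x^σ - (a*(1-s)^(a-1))*x^(-ν))
          - (vrr s x + x⁻¹*vr s x - ν^2/x^2 * v x s))
        = A*(N*(ρ*(1-s)^(ρ-1))*x^σ - (a*(1-s)^(a-1))*x^(-ν)) - A*(vrr s x)
          - A*(x⁻¹*vr s x) + A*(ν^2/x^2 * v x s) := by ring
      have h6 : ν^2/x^2*g x s - A*(ν^2/x^2 * v x s) = ν^2/x^2*(g x s - A*v x s) := by
        ring
      have h7 : (0:ℝ) < ν^2/x^2*(g x s - A*v x s) := by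
        apply mul_pos _ hw0
        positivity
      linarith only [hAmul, htime, hsp2, hPDE, h5, h6, h7, hexp]
    have hMP := parabolic_max_principle 0 t lam hlamcont (fun s _ _ => hlam0 s)
      (fun y s => g y s - A * v y s) hwcont
      (fun s hs1 hs2 => hb1 s hs1 hs2)
      (fun s hs1 hs2 => hb2 s hs1 hs2)
      hinit
      (fun x s hs1 hs2 h3 h4 h5 h6 h7 h8 => hkey x s hs1 hs2 h3 h4 h5 h6 h7 h8)
      (fun x s hs1 hs2 h3 h4 => hdt x s hs1 hs2 h3 h4)
      (fun x s hs1 hs2 h3 h4 => hdr x s hs1 hs2 h3 h4)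
      r t ht0 le_rfl hlamt hr1
    have hMP' : g r t - A * v r t ≤ 0 := hMP
    linarith [hMP']
  -- t = 1 slice by continuity
  have Hinit1 : ∀ x : ℝ, R ≤ x → x ≤ 1 → g x 1 ≤ A*(R^ν*x^(-ν) + K*x^β) := by
    intro x hx hx1
    have hx0 : (0:ℝ) < x := lt_of_lt_of_le hR0 hx
    have hx2γ : (0:ℝ) < x^(2*γ) := rpow_pos_of_pos hx0 _
    have hnb : Ioo (max 0 (1 - x^(2*γ))) 1 ∈ 𝓝[<] (1:ℝ) := by
      apply Ioo_mem_nhdsLT_of_mem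
      exact ⟨max_lt one_pos (by linarith), le_rfl⟩
    have hmem : ∀ s ∈ Ioo (max 0 (1 - x^(2*γ))) 1, (x, s) ∈ Ω := by
      intro s hs
      have hs0 : (0:ℝ) ≤ s := le_trans (le_max_left _ _) hs.1.le
      refine ⟨hx, hx1, hs0, by linarith [hs.2], ?_,
        rpow_le_one hx0.le hx1 (by linarith)⟩
      have h := le_max_right 0 (1 - x^(2*γ))
      linarith [hs.1]
    have htend1 : Tendsto (fun s => g x s) (𝓝[<] (1:ℝ)) (𝓝 (g x 1)) := by
      have hmemΩ : (x, (1:ℝ)) ∈ Ω :=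
        ⟨hx, hx1, zero_le_one, hT, by simpa using (rpow_nonneg hx0.le (2*γ)),
          rpow_le_one hx0.le hx1 (by linarith)⟩
      have hcw : ContinuousWithinAt (fun p : ℝ×ℝ => g p.1 p.2) Ω (x, 1) := hcont _ hmemΩ
      have hpath : Tendsto (fun s : ℝ => ((x, s) : ℝ×ℝ)) (𝓝[<] (1:ℝ))
          (𝓝[Ω] ((x : ℝ), (1:ℝ))) := by
        rw [tendsto_nhdsWithin_iff]
        refine ⟨((continuous_const.prodMk continuous_id).tendsto 1).mono_left
          nhdsWithin_le_nhds, ?_⟩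
        filter_upwards [hnb] with s hs
        exact hmem s hs
      exact hcw.tendsto.comp hpath
    have htendv : Tendsto (fun s => A * v x s) (𝓝[<] (1:ℝ))
        (𝓝 (A*(R^ν*x^(-ν) + K*x^β))) := by
      have hbase : Tendsto (fun s : ℝ => 1 - s) (𝓝[<] (1:ℝ)) (𝓝 0) := by
        have h : Tendsto (fun s : ℝ => 1 - s) (𝓝 (1:ℝ)) (𝓝 ((1:ℝ) - 1)) :=
          Continuous.tendsto (continuous_const.sub continuous_id) 1
        rw [show (1:ℝ) - 1 = 0 by norm_num] at h
        exact h.mono_left nhdsWithin_le_nhds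
      have hpow : ∀ c : ℝ, 0 < c → Tendsto (fun s : ℝ => (1-s)^c) (𝓝[<] (1:ℝ)) (𝓝 0) := by
        intro c hc
        have hcont0 : ContinuousAt (fun z : ℝ => z^c) 0 :=
          Real.continuousAt_rpow_const 0 c (Or.inr hc.le)
        have h := hcont0.tendsto.comp hbase
        rwa [Real.zero_rpow hc.ne'] at h
      have hv : Tendsto (fun s => v x s) (𝓝[<] (1:ℝ))
          (𝓝 ((0:ℝ)*x^(-ν) + R^ν*x^(-ν) + K*x^β - N*0*x^σ)) := by
        simp only [hvdef]
        exact ((((hpow a ha0).mul_const (x^(-ν))).add tendsto_const_nhds).add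
          tendsto_const_nhds).sub (((hpow ρ hρ0).const_mul N).mul_const (x^σ))
      have h := hv.const_mul A
      convert h using 2
      ring
    refine le_of_tendsto_of_tendsto htend1 htendv ?_
    filter_upwards [hnb] with s hs
    have hs0 : (0:ℝ) ≤ s := le_trans (le_max_left _ _) hs.1.le
    exact Hph1 x s hx hx1 hs0 hs.2 (by linarith [le_max_right 0 (1 - x^(2*γ)), hs.1])
  -- Phase 2 : comparison for t ≥ 1
  have Hph2 : ∀ x t' : ℝ, R ≤ x → x ≤ 1 → 1 ≤ t' → t' < T →
      g x t' ≤ A*(R^ν*x^(-ν) + K*x^β) := by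
    intro x t' hx hx1 ht1' htT'
    have hx0 : (0:ℝ) < x := lt_of_lt_of_le hR0 hx
    set v2 : ℝ → ℝ := fun y => R^ν*y^(-ν) + K*y^β with hv2def
    set v2r : ℝ → ℝ := fun z => (R^ν*(-ν))*z^(-ν-1) + (K*β)*z^(β-1) with hv2rdef
    set v2rr : ℝ → ℝ := fun z =>
      ((R^ν*(-ν))*(-ν-1))*z^(-ν-1-1) + ((K*β)*(β-1))*z^(β-1-1) with hv2rrdef
    have hv2R : (1:ℝ) ≤ v2 R := by
      have e1 : R^ν*R^(-ν) = 1 := by rw [← Real.rpow_add hR0]; simp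
      have e2 : (0:ℝ) ≤ K*R^β := mul_nonneg hK0.le (rpow_nonneg hR0.le _)
      simp only [hv2def]; linarith
    have hv21 : (1:ℝ) ≤ v2 1 := by
      simp only [hv2def, Real.one_rpow, mul_one]
      linarith [hRν.le]
    have Hv2r : ∀ z : ℝ, z ≠ 0 → HasDerivAt v2 (v2r z) z := by
      intro z hz
      exact hasDerivAt_twoterm (R^ν) K (-ν) β hz
    have Hv2rr : ∀ z : ℝ, z ≠ 0 → HasDerivAt v2r (v2rr z) z := by
      intro z hz
      exact hasDerivAt_twoterm (R^ν*(-ν)) (K*β) (-ν-1) (β-1) hz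
    have derivWb : ∀ s z : ℝ, z ≠ 0 → deriv (fun y => g y s - A * v2 y) z
        = deriv (fun y => g y s) z - A * v2r z := by
      intro s z hz
      exact (((hgdiff s z).hasDerivAt).sub ((Hv2r z hz).const_mul A)).deriv
    have derivW2b : ∀ s z : ℝ, z ≠ 0 → deriv (deriv (fun y => g y s - A * v2 y)) z
        = deriv (deriv (fun y => g y s)) z - A * v2rr z := by
      intro s z hz
      have hev : deriv (fun y => g y s - A * v2 y)
          =ᶠ[𝓝 z] fun q => deriv (fun y => g y s) q - A * v2r q := by
        filter_upwards [isOpen_compl_singleton.mem_nhds hz] with q hq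
        exact derivWb s q hq
      rw [hev.deriv_eq]
      exact (((hgderiv s z).hasDerivAt).sub ((Hv2rr z hz).const_mul A)).deriv
    have ID2 : ∀ z : ℝ, 0 < z →
        v2rr z + z⁻¹*v2r z - ν^2/z^2*v2 z = -(K*(ν^2-β^2)*z^(β-2)) := by
      intro z hz
      have Ea1 : z^(-ν-1-1) = z^(-ν-2) := by congr 1; ring
      have Ea2 : z⁻¹*z^(-ν-1) = z^(-ν-2) := by
        rw [← Real.rpow_neg_one z, ← Real.rpow_add hz]; congr 1; ring
      have Ea3 : z^(-ν)/z^2 = z^(-ν-2) := by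
        rw [← Real.rpow_natCast z 2, ← Real.rpow_sub hz]; norm_num
      have Eb1 : z^(β-1-1) = z^(β-2) := by congr 1; ring
      have Eb2 : z⁻¹*z^(β-1) = z^(β-2) := by
        rw [← Real.rpow_neg_one z, ← Real.rpow_add hz]; congr 1; ring
      have Eb3 : z^β/z^2 = z^(β-2) := by
        rw [← Real.rpow_natCast z 2, ← Real.rpow_sub hz]; norm_num
      simp only [hv2def, hv2rdef, hv2rrdef]
      linear_combination ((R^ν*(-ν))*(-ν-1))*Ea1 + (R^ν*(-ν))*Ea2 - ν^2*(R^ν)*Ea3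
        + ((K*β)*(β-1))*Eb1 + (K*β)*Eb2 - ν^2*K*Eb3
    have hv2cont : ContinuousOn v2 {z : ℝ | 0 < z} := by
      simp only [hv2def]
      have cν : ContinuousOn (fun z : ℝ => z^(-ν)) {z : ℝ | 0 < z} :=
        ContinuousOn.rpow_const (continuous_id.continuousOn)
          (fun z hz => Or.inl (ne_of_gt hz))
      have cβ : ContinuousOn (fun z : ℝ => z^β) {z : ℝ | 0 < z} :=
        ContinuousOn.rpow_const (continuous_id.continuousOn)
          (fun z hz => Or.inl (ne_of_gt hz))
      exact (continuousOn_const.mul cν).add (continuousOn_const.mul cβ)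
    clear_value v2 v2r v2rr
    have hsub2 : {p : ℝ×ℝ | 1 ≤ p.2 ∧ p.2 ≤ t' ∧ R ≤ p.1 ∧ p.1 ≤ 1} ⊆ Ω := by
      rintro ⟨y, s⟩ ⟨hs1, hst, hy, hy1⟩
      have hy0 : (0:ℝ) < y := lt_of_lt_of_le hR0 hy
      exact ⟨hy, hy1, by linarith, by linarith,
        le_trans (by linarith) (rpow_nonneg hy0.le _), rpow_le_one hy0.le hy1 (by linarith)⟩
    have hwcont2 : ContinuousOn (fun p : ℝ×ℝ => g p.1 p.2 - A * v2 p.1)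
        {p : ℝ×ℝ | 1 ≤ p.2 ∧ p.2 ≤ t' ∧ R ≤ p.1 ∧ p.1 ≤ 1} := by
      apply ContinuousOn.sub (hcont.mono hsub2)
      apply ContinuousOn.mul continuousOn_const
      apply (hv2cont.comp (continuous_fst.continuousOn))
      rintro ⟨y, s⟩ ⟨_, _, hy, _⟩
      exact lt_of_lt_of_le hR0 hy
    have hb1' : ∀ s : ℝ, 1 ≤ s → s ≤ t' → g 1 s - A * v2 1 ≤ 0 := by
      intro s hs1 hst
      have hgb := (hb s (by linarith) (by linarith)).1
      have := mul_le_mul_of_nonneg_left hv21 hA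
      linarith
    have hb2' : ∀ s : ℝ, 1 ≤ s → s ≤ t' → g R s - A * v2 R ≤ 0 := by
      intro s hs1 hst
      have hgb := (hb s (by linarith) (by linarith)).2
      have heq : max R ((max (1-s) 0)^(1/(2*γ))) = R := by
        rw [max_eq_right (by linarith : 1-s ≤ 0), Real.zero_rpow (by positivity : 1/(2*γ) ≠ 0),
          max_eq_left hR0.le]
      rw [heq] at hgb
      have := mul_le_mul_of_nonneg_left hv2R hA
      linarith
    have hkey2 : ∀ z s : ℝ, 1 < s → s ≤ t' → R < z → z < 1 →
        0 < g z s - A * v2 z →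
        0 ≤ deriv (fun s' => g z s' - A * v2 z) s →
        deriv (fun y => g y s - A * v2 y) z = 0 →
        deriv (deriv (fun y => g y s - A * v2 y)) z ≤ 0 → False := by
      intro z s hs1 hst hRz hz1 hw0 htime hsp1 hsp2
      have hz0 : (0:ℝ) < z := lt_trans hR0 hRz
      have hDt : deriv (fun s' => g z s' - A * v2 z) s = deriv (fun s' => g z s') s :=
        (((hd z s).hasDerivAt).sub_const (A * v2 z)).deriv
      rw [hDt] at htime
      rw [derivWb s z hz0.ne'] at hsp1
      rw [derivW2b s z hz0.ne'] at hsp2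
      have hPDE := hpde z s hRz.le hz1.le (by linarith) (by linarith)
        (le_trans (by linarith) (rpow_nonneg hz0.le _)) (rpow_le_one hz0.le hz1.le (by linarith))
      have hSUP2 : z^(μ-2) ≤ K*(ν^2-β^2)*z^(β-2) := by
        have t1 : z^(μ-2) ≤ z^(β-2) := rpow_le_rpow_of_exponent_ge hz0 hz1.le (by linarith)
        have t2 : (1:ℝ)*z^(β-2) ≤ K*(ν^2-β^2)*z^(β-2) :=
          mul_le_mul_of_nonneg_right hKnub (rpow_nonneg hz0.le _)
        linarith
      have hIDv := ID2 z hz0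
      set Gt := deriv (fun s' => g z s') s with hGtdef
      set Gr := deriv (fun y => g y s) z with hGrdef
      set Grr := deriv (deriv (fun y => g y s)) z with hGrrdef
      have hGr : Gr = A * v2r z := by linarith [hsp1]
      have h5 : z⁻¹*Gr = A*(z⁻¹*v2r z) := by rw [hGr]; ring
      have hVTsub : z^(μ-2) ≤ 0 - (v2rr z + z⁻¹*v2r z - ν^2/z^2 * v2 z) := by
        rw [hIDv]
        linarith [hSUP2]
      have hAmul := mul_le_mul_of_nonneg_left hVTsub hA
      have hexp : A*((0:ℝ) - (v2rr z + z⁻¹*v2r z - ν^2/z^2 * v2 z))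
        = 0 - A*(v2rr z) - A*(z⁻¹*v2r z) + A*(ν^2/z^2 * v2 z) := by ring
      have h6 : ν^2/z^2*g z s - A*(ν^2/z^2 * v2 z) = ν^2/z^2*(g z s - A*v2 z) := by ring
      have h7 : (0:ℝ) < ν^2/z^2*(g z s - A*v2 z) := by
        apply mul_pos _ hw0
        positivity
      linarith only [hAmul, htime, hsp2, hPDE, h5, h6, h7, hexp]
    have hMP := parabolic_max_principle 1 t' (fun _ => R) continuous_const
      (fun s _ _ => hR0)
      (fun y s => g y s - A * v2 y) hwcont2
      (fun s hs1 hs2 => hb1' s hs1 hs2)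
      (fun s hs1 hs2 => hb2' s hs1 hs2)
      (fun y h1 h2 => by
        show g y 1 - A * v2 y ≤ 0
        have h := Hinit1 y h1 h2
        have e : A*(R^ν*y^(-ν) + K*y^β) = A * v2 y := by rw [hv2def]
        linarith [h, e])
      (fun z s hs1 hs2 h3 h4 h5 h6 h7 h8 => hkey2 z s hs1 hs2 h3 h4 h5 h6 h7 h8)
      (fun z s hs1 hs2 h3 h4 => (hd z s).sub ((differentiableAt_const _)))
      (fun z s hs1 hs2 h3 h4 => by
        have hz0 : (0:ℝ) < z := lt_trans hR0 h3
        constructor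
        · filter_upwards [isOpen_compl_singleton.mem_nhds hz0.ne'] with q hq
          exact (hgdiff s q).sub ((Hv2r q hq).differentiableAt.const_mul A)
        · have hev : deriv (fun x => g x s - A * v2 x)
              =ᶠ[𝓝 z] fun q => deriv (fun y => g y s) q - A * v2r q := by
            filter_upwards [isOpen_compl_singleton.mem_nhds hz0.ne'] with q hq
            exact derivWb s q hq
          rw [hev.differentiableAt_iff]
          exact (hgderiv s z).sub ((Hv2rr z hz0.ne').differentiableAt.const_mul A))
      x t' ht1' le_rfl hx hx1
    have hMP' : g x t' - A * v2 x ≤ 0 := hMP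
    have e : A * v2 x = A*(R^ν*x^(-ν) + K*x^β) := by rw [hv2def]
    linarith [hMP', e]
  -- final assembly
  intro r t hr hr1 ht0 htT h1t h2t
  have hr0 : (0:ℝ) < r := lt_of_lt_of_le hR0 hr
  rw [← hβdef]
  rcases lt_or_ge t 1 with hcase | hcase
  · calc g r t ≤ A * v r t := Hph1 r t hr hr1 ht0 hcase h1t
      _ ≤ A * (2*K*((max R ((max (1-t) 0)^(1/(2*γ)))/r)^ν + r^β)) :=
          mul_le_mul_of_nonneg_left (hsize r t hr hr1 ht0 hcase) hA
      _ = 2*K*A*((max R ((max (1-t) 0)^(1/(2*γ)))/r)^ν + r^β) := by ring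
  · have h := Hph2 r t hr hr1 hcase htT
    have hleq : max R ((max (1-t) 0)^(1/(2*γ))) = R := by
      have h1 : max (1-t) 0 = 0 := max_eq_right (by linarith)
      rw [h1, zero_rpow (by positivity : 1/(2*γ) ≠ 0), max_eq_left hR0.le]
    rw [hleq]
    have hRr : R^ν*r^(-ν) = (R/r)^ν := by
      rw [div_rpow hR0.le hr0.le, Real.rpow_neg hr0.le, div_eq_mul_inv]
    calc g r t ≤ A*(R^ν*r^(-ν) + K*r^β) := h
      _ = A*((R/r)^ν + K*r^β) := by rw [hRr]
      _ ≤ 2*K*A*((R/r)^ν + r^β) := by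
          have h1 : (0:ℝ) ≤ (R/r)^ν := rpow_nonneg (by positivity) _
          have h2 : (0:ℝ) ≤ r^β := rpow_nonneg hr0.le _
          have e : 2*K*A*((R/r)^ν + r^β) = (2*K)*(A*(R/r)^ν) + (2*K)*(A*r^β) := by ring
          have e2 : A*((R/r)^ν + K*r^β) = 1*(A*(R/r)^ν) + K*(A*r^β) := by ring
          have f1 : 1*(A*(R/r)^ν) ≤ (2*K)*(A*(R/r)^ν) :=
            mul_le_mul_of_nonneg_right (by linarith) (mul_nonneg hA h1)
          have f2 : K*(A*r^β) ≤ (2*K)*(A*r^β) :=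
            mul_le_mul_of_nonneg_right (by linarith) (mul_nonneg hA h2)
          linarith [e, e2, f1, f2]
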